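/- There exist a well-founded T, well-founded components (P_t), and an element a of the ranked sum P such that rank_P(a) > rank_{P_{f(a)}}(a) + rank_T(f(a)); concretely, take T = ω + 1 and P_t = {0,1} for all t ∈ T; then the top element a of P_ω satisfies rank_P(a) > rank_{P_ω}(a) + rank_T(ω) = 1 + ω = ω. -/

import Mathlib

open Ordinal

section RankedSum

variable {T : Type*} [PartialOrder T] {P : T → Type*} [∀ t, PartialOrder (P t)]
  [∀ t, WellFoundedLT (P t)]

/-- The primitive rank of an element of the disjoint union: its ordinal rank
inside its own component. -/
noncomputable def primRank (a : Σ t, P t) : Ordinal :=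
  IsWellFounded.rank (α := P a.1) (· < ·) a.2

/-- The ranked sum (strict) order on the disjoint union of the family `P`. -/
def RankedLT (a b : Σ t, P t) : Prop :=
  (∃ h : a.1 = b.1, (h ▸ a.2) < b.2) ∨ (a.1 < b.1 ∧ primRank a ≤ primRank b)

/-- The reflexive closure of the ranked sum order. -/
def RankedLE (a b : Σ t, P t) : Prop :=
  RankedLT a b ∨ a = b

variable [WellFoundedLT T]

theorem rankedLT_wf : WellFounded (RankedLT (T := T) (P := P)) := by
  have hsub : Subrelation (RankedLT (T := T) (P := P))
      (InvImage (Prod.Lex (· < ·) (· < ·))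
        (fun a => (IsWellFounded.rank (α := T) (· < ·) a.1, primRank a))) := by
    rintro ⟨s, x⟩ ⟨t, y⟩ (⟨h, hlt⟩ | ⟨h, _⟩)
    · dsimp at h
      subst h
      exact Prod.Lex.right _ (IsWellFounded.rank_lt_of_rel hlt)
    · exact Prod.Lex.left _ _ (IsWellFounded.rank_lt_of_rel h)
  exact Subrelation.wf hsub
    (InvImage.wf _ (WellFounded.prod_lex wellFounded_lt wellFounded_lt))

instance : IsWellFounded (Σ t, P t) RankedLT := ⟨rankedLT_wf⟩

/-- The rank of an element of the ranked sum. -/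
noncomputable def rankedRank (a : Σ t, P t) : Ordinal :=
  IsWellFounded.rank (RankedLT (T := T) (P := P)) a

end RankedSum


section Aux

universe u

lemma rank_Iic {o : Ordinal.{u}} : ∀ x : Set.Iic o,
    IsWellFounded.rank (α := Set.Iic o) (· < ·) x = Ordinal.lift.{u + 1, u} x.1 := by
  intro x
  induction x using IsWellFounded.induction (α := Set.Iic o) (r := (· < ·)) with
  | ind x IH =>
    apply le_antisymm
    · rw [IsWellFounded.rank_eq]
      apply Ordinal.iSup_le
      rintro ⟨b, hb⟩
      rw [Order.succ_le_iff, IH b hb]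
      exact lift_lt.2 hb
    · apply le_of_forall_lt
      intro c hc
      rw [Ordinal.lt_lift_iff] at hc
      obtain ⟨c', hc', rfl⟩ := hc
      have hc'' : c' ≤ o := le_of_lt (lt_of_lt_of_le hc' x.2)
      have hlt : (⟨c', hc''⟩ : Set.Iic o) < x := hc'
      calc Ordinal.lift.{u + 1, u} c'
          = IsWellFounded.rank (α := Set.Iic o) (· < ·) ⟨c', hc''⟩ := (IH _ hlt).symm
        _ < _ := IsWellFounded.rank_lt_of_rel hlt

lemma rank_bool_false : IsWellFounded.rank (α := Bool) (· < ·) false = 0 := by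
  apply le_antisymm _ (zero_le)
  rw [IsWellFounded.rank_eq]
  apply Ordinal.iSup_le
  rintro ⟨b, hb⟩
  exact absurd hb (by simp [Bool.lt_iff])

lemma rank_bool_true : IsWellFounded.rank (α := Bool) (· < ·) true ≤ 1 := by
  rw [IsWellFounded.rank_eq]
  apply Ordinal.iSup_le
  rintro ⟨b, hb⟩
  have hb' : b = false := (Bool.lt_iff.1 hb).1
  subst hb'
  rw [rank_bool_false]
  simp

lemma rank_coe_nat_le (n : ℕ) :
    IsWellFounded.rank (α := ℕ∞) (· < ·) (n : ℕ∞) ≤ n := by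
  induction n using Nat.strong_induction_on with
  | _ n IH =>
    rw [IsWellFounded.rank_eq]
    apply Ordinal.iSup_le
    rintro ⟨b, hb⟩
    obtain ⟨m, rfl, hm⟩ := WithTop.lt_iff_exists_coe.1 hb
    have hmn : m < n := by exact WithTop.coe_lt_coe.1 hm
    rw [Order.succ_le_iff]
    exact lt_of_le_of_lt (IH m hmn) (by exact_mod_cast hmn)

lemma rank_top_le : IsWellFounded.rank (α := ℕ∞) (· < ·) (⊤ : ℕ∞) ≤ ω := by
  rw [IsWellFounded.rank_eq]
  apply Ordinal.iSup_le
  rintro ⟨b, hb⟩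
  obtain ⟨m, rfl, -⟩ := WithTop.lt_iff_exists_coe.1 hb
  rw [Order.succ_le_iff]
  exact lt_of_le_of_lt (rank_coe_nat_le m) (nat_lt_omega0 m)

lemma rankedRank_nat_ge (n : ℕ) :
    (n : Ordinal) ≤ rankedRank (T := ℕ∞) (P := fun _ => Bool) ⟨(n : ℕ∞), false⟩ := by
  induction n with
  | zero => exact zero_le
  | succ n IH =>
    have hstep : RankedLT (T := ℕ∞) (P := fun _ => Bool)
        ⟨(n : ℕ∞), false⟩ ⟨((n + 1 : ℕ) : ℕ∞), false⟩ :=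
      Or.inr ⟨by show ((n : ℕ) : ℕ∞) < ((n + 1 : ℕ) : ℕ∞); exact_mod_cast Nat.lt_succ_self n,
        le_refl _⟩
    have hlt : rankedRank (T := ℕ∞) (P := fun _ => Bool) ⟨(n : ℕ∞), false⟩
        < rankedRank (T := ℕ∞) (P := fun _ => Bool) ⟨((n + 1 : ℕ) : ℕ∞), false⟩ :=
      IsWellFounded.rank_lt_of_rel hstep
    have h2 := lt_of_le_of_lt IH hlt
    rw [Nat.cast_succ]
    exact Order.add_one_le_of_lt h2

lemma omega_le_rankedRank_top :
    ω ≤ rankedRank (T := ℕ∞) (P := fun _ => Bool) ⟨(⊤ : ℕ∞), false⟩ := by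
  rw [omega0_le]
  intro n
  have hstep : RankedLT (T := ℕ∞) (P := fun _ => Bool)
      ⟨(n : ℕ∞), false⟩ ⟨(⊤ : ℕ∞), false⟩ :=
    Or.inr ⟨WithTop.coe_lt_top n, le_refl _⟩
  have hlt : rankedRank (T := ℕ∞) (P := fun _ => Bool) ⟨(n : ℕ∞), false⟩
      < rankedRank (T := ℕ∞) (P := fun _ => Bool) ⟨(⊤ : ℕ∞), false⟩ :=
    IsWellFounded.rank_lt_of_rel hstep
  exact le_of_lt (lt_of_le_of_lt (rankedRank_nat_ge n) hlt)

lemma rankedRank_iic_nat_ge (n : ℕ) :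
    (n : Ordinal.{u + 1}) ≤ rankedRank (T := Set.Iic (ω : Ordinal.{u}))
      (P := fun _ => Set.Iic (1 : Ordinal.{u}))
      ⟨⟨(n : Ordinal), Set.mem_Iic.mpr (nat_lt_omega0 n).le⟩,
        ⟨0, Set.mem_Iic.mpr zero_le_one⟩⟩ := by
  induction n with
  | zero => exact zero_le
  | succ n IH =>
    have hstep : RankedLT (T := Set.Iic (ω : Ordinal.{u}))
        (P := fun _ => Set.Iic (1 : Ordinal.{u}))
        ⟨⟨(n : Ordinal), Set.mem_Iic.mpr (nat_lt_omega0 n).le⟩,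
          ⟨0, Set.mem_Iic.mpr zero_le_one⟩⟩
        ⟨⟨((n + 1 : ℕ) : Ordinal), Set.mem_Iic.mpr (nat_lt_omega0 (n + 1)).le⟩,
          ⟨0, Set.mem_Iic.mpr zero_le_one⟩⟩ :=
      Or.inr ⟨by show ((n : ℕ) : Ordinal.{u}) < ((n + 1 : ℕ) : Ordinal.{u}); exact_mod_cast Nat.lt_succ_self n,
        le_refl _⟩
    have hlt : rankedRank (T := Set.Iic (ω : Ordinal.{u}))
          (P := fun _ => Set.Iic (1 : Ordinal.{u}))
          ⟨⟨(n : Ordinal), Set.mem_Iic.mpr (nat_lt_omega0 n).le⟩,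
            ⟨0, Set.mem_Iic.mpr zero_le_one⟩⟩
        < rankedRank (T := Set.Iic (ω : Ordinal.{u}))
          (P := fun _ => Set.Iic (1 : Ordinal.{u}))
          ⟨⟨((n + 1 : ℕ) : Ordinal), Set.mem_Iic.mpr (nat_lt_omega0 (n + 1)).le⟩,
            ⟨0, Set.mem_Iic.mpr zero_le_one⟩⟩ :=
      IsWellFounded.rank_lt_of_rel hstep
    have h2 := lt_of_le_of_lt IH hlt
    rw [Nat.cast_succ]
    exact Order.add_one_le_of_lt h2

lemma omega_le_rankedRank_iic :
    ω ≤ rankedRank (T := Set.Iic (ω : Ordinal.{u})) (P := fun _ => Set.Iic (1 : Ordinal.{u}))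
      ⟨⟨ω, Set.self_mem_Iic⟩, ⟨0, Set.mem_Iic.mpr zero_le_one⟩⟩ := by
  rw [omega0_le]
  intro n
  have hstep : RankedLT (T := Set.Iic (ω : Ordinal.{u}))
      (P := fun _ => Set.Iic (1 : Ordinal.{u}))
      ⟨⟨(n : Ordinal), Set.mem_Iic.mpr (nat_lt_omega0 n).le⟩,
        ⟨0, Set.mem_Iic.mpr zero_le_one⟩⟩
      ⟨⟨ω, Set.self_mem_Iic⟩, ⟨0, Set.mem_Iic.mpr zero_le_one⟩⟩ :=
    Or.inr ⟨nat_lt_omega0 n, le_refl _⟩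
  have hlt : rankedRank (T := Set.Iic (ω : Ordinal.{u}))
        (P := fun _ => Set.Iic (1 : Ordinal.{u}))
        ⟨⟨(n : Ordinal), Set.mem_Iic.mpr (nat_lt_omega0 n).le⟩,
          ⟨0, Set.mem_Iic.mpr zero_le_one⟩⟩
      < rankedRank (T := Set.Iic (ω : Ordinal.{u}))
        (P := fun _ => Set.Iic (1 : Ordinal.{u}))
        ⟨⟨ω, Set.self_mem_Iic⟩, ⟨0, Set.mem_Iic.mpr zero_le_one⟩⟩ :=
    IsWellFounded.rank_lt_of_rel hstep
  exact le_of_lt (lt_of_le_of_lt (rankedRank_iic_nat_ge n) hlt)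

end Aux

/-- The "switched" bound `rank_P a ≤ rank_{P_{f a}} a + rank_T (f a)` also fails:
take `T = ω + 1` and all components equal to `{0, 1}`. -/
theorem switched_bound_fails :
    (∃ (T : Type) (_ : PartialOrder T) (_ : WellFoundedLT T)
        (P : T → Type) (_ : ∀ t, PartialOrder (P t)) (_ : ∀ t, WellFoundedLT (P t))
        (a : Σ t, P t),
        primRank a + IsWellFounded.rank (α := T) (· < ·) a.1 < rankedRank a) ∧
    (∀ a : Σ _ : Set.Iic (ω : Ordinal), Set.Iic (1 : Ordinal),
      a = ⟨⟨ω, Set.self_mem_Iic⟩, ⟨1, Set.self_mem_Iic⟩⟩ →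
      primRank a + IsWellFounded.rank (α := Set.Iic (ω : Ordinal)) (· < ·) a.1 = 1 + ω ∧
      (1 : Ordinal.{1}) + ω = ω ∧
      primRank a + IsWellFounded.rank (α := Set.Iic (ω : Ordinal)) (· < ·) a.1
        < rankedRank a) := by
  constructor
  · refine ⟨ℕ∞, inferInstance, inferInstance, fun _ => Bool, fun _ => inferInstance,
      fun _ => inferInstance, ⟨(⊤ : ℕ∞), true⟩, ?_⟩
    have hLHS : primRank (T := ℕ∞) (P := fun _ => Bool) ⟨(⊤ : ℕ∞), true⟩
        + IsWellFounded.rank (α := ℕ∞) (· < ·) (⊤ : ℕ∞) ≤ 1 + ω :=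
      add_le_add rank_bool_true rank_top_le
    have hstep : RankedLT (T := ℕ∞) (P := fun _ => Bool)
        ⟨(⊤ : ℕ∞), false⟩ ⟨(⊤ : ℕ∞), true⟩ := Or.inl ⟨rfl, Bool.false_lt_true⟩
    have hRHS : ω < rankedRank (T := ℕ∞) (P := fun _ => Bool) ⟨(⊤ : ℕ∞), true⟩ :=
      lt_of_le_of_lt omega_le_rankedRank_top
        (IsWellFounded.rank_lt_of_rel (r := RankedLT (T := ℕ∞) (P := fun _ => Bool)) hstep)
    calc primRank (T := ℕ∞) (P := fun _ => Bool) ⟨(⊤ : ℕ∞), true⟩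
          + IsWellFounded.rank (α := ℕ∞) (· < ·) (⊤ : ℕ∞) ≤ 1 + ω := hLHS
      _ = ω := one_add_omega0
      _ < _ := hRHS
  · rintro a rfl
    have h1 : primRank (⟨⟨ω, Set.self_mem_Iic⟩, ⟨1, Set.self_mem_Iic⟩⟩ :
        Σ _ : Set.Iic (ω : Ordinal), Set.Iic (1 : Ordinal)) = 1 := by
      show IsWellFounded.rank (α := Set.Iic (1 : Ordinal)) (· < ·) ⟨1, Set.self_mem_Iic⟩ = 1
      rw [rank_Iic]; exact lift_one
    have h2 : IsWellFounded.rank (α := Set.Iic (ω : Ordinal)) (· < ·)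
        (⟨ω, Set.self_mem_Iic⟩ : Set.Iic (ω : Ordinal)) = ω := by
      rw [rank_Iic]; exact lift_omega0
    refine ⟨?_, one_add_omega0, ?_⟩
    · show primRank (⟨⟨ω, Set.self_mem_Iic⟩, ⟨1, Set.self_mem_Iic⟩⟩ :
            Σ _ : Set.Iic (ω : Ordinal), Set.Iic (1 : Ordinal))
        + IsWellFounded.rank (α := Set.Iic (ω : Ordinal)) (· < ·)
          (⟨ω, Set.self_mem_Iic⟩ : Set.Iic (ω : Ordinal)) = 1 + ω
      rw [h1, h2]
    show primRank (⟨⟨ω, Set.self_mem_Iic⟩, ⟨1, Set.self_mem_Iic⟩⟩ :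
            Σ _ : Set.Iic (ω : Ordinal), Set.Iic (1 : Ordinal))
        + IsWellFounded.rank (α := Set.Iic (ω : Ordinal)) (· < ·)
          (⟨ω, Set.self_mem_Iic⟩ : Set.Iic (ω : Ordinal))
        < rankedRank (⟨⟨ω, Set.self_mem_Iic⟩, ⟨1, Set.self_mem_Iic⟩⟩ :
            Σ _ : Set.Iic (ω : Ordinal), Set.Iic (1 : Ordinal))
    rw [h1, h2, one_add_omega0]
    have hstep : RankedLT (T := Set.Iic (ω : Ordinal)) (P := fun _ => Set.Iic (1 : Ordinal))
        ⟨⟨ω, Set.self_mem_Iic⟩, ⟨0, Set.mem_Iic.mpr zero_le_one⟩⟩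
        ⟨⟨ω, Set.self_mem_Iic⟩, ⟨1, Set.self_mem_Iic⟩⟩ :=
      Or.inl ⟨rfl, by exact Subtype.mk_lt_mk.mpr zero_lt_one⟩
    exact lt_of_le_of_lt omega_le_rankedRank_iic (IsWellFounded.rank_lt_of_rel hstep)
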